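/- arXiv:2301.02536 — 2 statements merged into one kernel-verified Lean document; each statement's English description precedes it below -/
import Mathlib

section
/- For a Lyapunov sequence A and a nonzero subspace L ⊆ ℝ^d, the upper Bohl exponent of L computed over pairs n−m > N equals the upper Bohl exponent computed over pairs with both n−m > N and m > N; i.e. inf_N sup_{n−m>N} sup_{x₀∈L∖{0}} (1/(n−m)) ln(‖x(n,x₀)‖/‖x(m,x₀)‖) = inf_N sup_{n−m>N, m>N} sup_{x₀∈L∖{0}} (1/(n−m)) ln(‖x(n,x₀)‖/‖x(m,x₀)‖). -/
open Filter Topology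

noncomputable section

abbrev Euc (d : ℕ) := EuclideanSpace ℝ (Fin d)

/-- forward product `A(m+k-1) ⋯ A(m)` -/
def fwd {d : ℕ} (A : ℕ → (Euc d →L[ℝ] Euc d)) (m : ℕ) : ℕ → (Euc d →L[ℝ] Euc d)
  | 0 => 1
  | k + 1 => A (m + k) * fwd A m k

/-- backward product `Ainv(n) ⋯ Ainv(n+k-1)` -/
def bwd {d : ℕ} (Ainv : ℕ → (Euc d →L[ℝ] Euc d)) (n : ℕ) : ℕ → (Euc d →L[ℝ] Euc d)
  | 0 => 1
  | k + 1 => bwd Ainv n k * Ainv (n + k)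

/-- transition matrix Φ_A(n,m) -/
def Phi {d : ℕ} (A Ainv : ℕ → (Euc d →L[ℝ] Euc d)) (n m : ℕ) : Euc d →L[ℝ] Euc d :=
  if m ≤ n then fwd A m (n - m) else bwd Ainv n (m - n)

/-- A is a bounded sequence of invertible maps with bounded inverse sequence Ainv -/
def IsLyapunov {d : ℕ} (A Ainv : ℕ → (Euc d →L[ℝ] Euc d)) : Prop :=
  (∀ n, A n * Ainv n = 1) ∧ (∀ n, Ainv n * A n = 1) ∧
    BddAbove (Set.range fun n => ‖A n‖) ∧ BddAbove (Set.range fun n => ‖Ainv n‖)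

/-- `‖A‖_∞ = sup_n ‖A(n)‖` -/
def supNorm {d : ℕ} (A : ℕ → (Euc d →L[ℝ] Euc d)) : ℝ := ⨆ n, ‖A n‖

/-- solution `x(n,x₀) = Φ_A(n,0) x₀` -/
def sol {d : ℕ} (A : ℕ → (Euc d →L[ℝ] Euc d)) (n : ℕ) (x₀ : Euc d) : Euc d :=
  fwd A 0 n x₀

/-- `λ(n,m) = (1/(n-m)) ln (‖x(n,x₀)‖ / ‖x(m,x₀)‖)` -/
def lam {d : ℕ} (A : ℕ → (Euc d →L[ℝ] Euc d)) (n m : ℕ) (x₀ : Euc d) : ℝ :=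
  Real.log (‖sol A n x₀‖ / ‖sol A m x₀‖) / ((n : ℝ) - (m : ℝ))

/-- upper Bohl exponent of a subspace -/
def upperBohl {d : ℕ} (A : ℕ → (Euc d →L[ℝ] Euc d)) (L : Set (Euc d)) : ℝ :=
  ⨅ N : ℕ, sSup {r | ∃ n m : ℕ, ∃ x₀ : Euc d,
    N < n - m ∧ x₀ ∈ L ∧ x₀ ≠ 0 ∧ r = lam A n m x₀}

/-- lower Bohl exponent of a subspace -/
def lowerBohl {d : ℕ} (A : ℕ → (Euc d →L[ℝ] Euc d)) (L : Set (Euc d)) : ℝ :=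
  ⨆ N : ℕ, sInf {r | ∃ n m : ℕ, ∃ x₀ : Euc d,
    N < n - m ∧ x₀ ∈ L ∧ x₀ ≠ 0 ∧ r = lam A n m x₀}

/-- upper Bohl exponent of a vector -/
def upperBohlVec {d : ℕ} (A : ℕ → (Euc d →L[ℝ] Euc d)) (x₀ : Euc d) : ℝ :=
  ⨅ N : ℕ, sSup {r | ∃ n m : ℕ, N < n - m ∧ r = lam A n m x₀}

/-- lower Bohl exponent of a vector -/
def lowerBohlVec {d : ℕ} (A : ℕ → (Euc d →L[ℝ] Euc d)) (x₀ : Euc d) : ℝ :=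
  ⨆ N : ℕ, sInf {r | ∃ n m : ℕ, N < n - m ∧ r = lam A n m x₀}

/-- Bohl spectrum -/
def bohlSpectrum {d : ℕ} (A : ℕ → (Euc d →L[ℝ] Euc d)) : Set ℝ :=
  {γ | ∃ x₀ : Euc d, x₀ ≠ 0 ∧ γ ∈ Set.Icc (lowerBohlVec A x₀) (upperBohlVec A x₀)}

/-- the γ-shifted system `e^{-γ} A` -/
def shift {d : ℕ} (A : ℕ → (Euc d →L[ℝ] Euc d)) (γ : ℝ) : ℕ → (Euc d →L[ℝ] Euc d) :=
  fun n => Real.exp (-γ) • A n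

/-- Bohl dichotomy on a given pair of subspaces -/
def HasBohlDichotomyOn {d : ℕ} (A : ℕ → (Euc d →L[ℝ] Euc d))
    (L₁ L₂ : Submodule ℝ (Euc d)) : Prop :=
  ∃ α : ℝ, 0 < α ∧ ∃ C₁ C₂ : Euc d → ℝ, (∀ x, 0 < C₁ x) ∧ (∀ x, 0 < C₂ x) ∧
    (∀ x₀ ∈ L₁, ∀ m n : ℕ, m ≤ n →
      ‖sol A n x₀‖ ≤ C₁ x₀ * Real.exp (-α * ((n : ℝ) - (m : ℝ))) * ‖sol A m x₀‖) ∧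
    (∀ x₀ ∈ L₂, ∀ m n : ℕ, m ≤ n →
      C₂ x₀ * Real.exp (α * ((n : ℝ) - (m : ℝ))) * ‖sol A m x₀‖ ≤ ‖sol A n x₀‖)

/-- Bohl dichotomy -/
def HasBohlDichotomy {d : ℕ} (A : ℕ → (Euc d →L[ℝ] Euc d)) : Prop :=
  ∃ L₁ L₂ : Submodule ℝ (Euc d), IsCompl L₁ L₂ ∧ HasBohlDichotomyOn A L₁ L₂

/-- Bohl dichotomy spectrum -/
def bdSpectrum {d : ℕ} (A : ℕ → (Euc d →L[ℝ] Euc d)) : Set ℝ :=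
  {γ | ¬ HasBohlDichotomy (shift A γ)}

/-- upper Bohl exponent computed over pairs with both `n - m > N` and `m > N` -/
def upperBohl' {d : ℕ} (A : ℕ → (Euc d →L[ℝ] Euc d)) (L : Set (Euc d)) : ℝ :=
  ⨅ N : ℕ, sSup {r | ∃ n m : ℕ, ∃ x₀ : Euc d,
    N < n - m ∧ N < m ∧ x₀ ∈ L ∧ x₀ ≠ 0 ∧ r = lam A n m x₀}

section auxlemmas
variable {d : ℕ} {A Ainv : ℕ → (Euc d →L[ℝ] Euc d)}

lemma sol_succ (A : ℕ → (Euc d →L[ℝ] Euc d)) (n : ℕ) (x₀ : Euc d) :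
    sol A (n+1) x₀ = A n (sol A n x₀) := by
  simp [sol, fwd]

lemma sol_zero (A : ℕ → (Euc d →L[ℝ] Euc d)) (x₀ : Euc d) : sol A 0 x₀ = x₀ := by
  simp [sol, fwd]

lemma sol_ne_zero (h : ∀ n, Ainv n * A n = 1) {x₀ : Euc d} (hx : x₀ ≠ 0) (n : ℕ) :
    sol A n x₀ ≠ 0 := by
  induction n with
  | zero => simpa [sol_zero] using hx
  | succ n ih =>
    rw [sol_succ]
    intro hcon
    apply ih
    have h2 : (Ainv n * A n) (sol A n x₀) = Ainv n 0 := by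
      rw [ContinuousLinearMap.mul_apply, hcon]
    rw [h n] at h2
    simpa using h2

lemma norm_sol_succ_le {c : ℝ} (hc : ∀ n, ‖A n‖ ≤ c) (n : ℕ) (x₀ : Euc d) :
    ‖sol A (n+1) x₀‖ ≤ c * ‖sol A n x₀‖ := by
  rw [sol_succ]
  exact ((A n).le_opNorm _).trans (mul_le_mul_of_nonneg_right (hc n) (norm_nonneg _))

lemma norm_sol_le_succ {c : ℝ} (h : ∀ n, Ainv n * A n = 1) (hc : ∀ n, ‖Ainv n‖ ≤ c)
    (n : ℕ) (x₀ : Euc d) : ‖sol A n x₀‖ ≤ c * ‖sol A (n+1) x₀‖ := by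
  have key : sol A n x₀ = Ainv n (sol A (n+1) x₀) := by
    rw [sol_succ, ← ContinuousLinearMap.mul_apply, h n, ContinuousLinearMap.one_apply]
  rw [key]
  exact ((Ainv n).le_opNorm _).trans (mul_le_mul_of_nonneg_right (hc n) (norm_nonneg _))

end auxlemmas

set_option maxHeartbeats 1000000 in
theorem stmt2 {d : ℕ} (A Ainv : ℕ → (Euc d →L[ℝ] Euc d)) (hA : IsLyapunov A Ainv)
    (L : Submodule ℝ (Euc d)) (hL : L ≠ ⊥) :
    upperBohl A (L : Set (Euc d)) = upperBohl' A (L : Set (Euc d)) := by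
  obtain ⟨hAI, hIA, ⟨a, ha⟩, ⟨b, hb⟩⟩ := hA
  set c : ℝ := max a (max b 1) with hcdef
  have hc1 : (1:ℝ) ≤ c := le_max_of_le_right (le_max_right _ _)
  have hcA : ∀ n, ‖A n‖ ≤ c := fun n =>
    le_max_of_le_left (ha (Set.mem_range_self n))
  have hcI : ∀ n, ‖Ainv n‖ ≤ c := fun n =>
    le_max_of_le_right (le_max_of_le_left (hb (Set.mem_range_self n)))
  set K : ℝ := Real.log c with hKdef
  have hK0 : 0 ≤ K := Real.log_nonneg hc1
  have hc0 : (0:ℝ) < c := lt_of_lt_of_le one_pos hc1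
  set f : Euc d → ℕ → ℝ := fun x k => Real.log ‖sol A k x‖ with hfdef
  have hpos : ∀ (x₀ : Euc d), x₀ ≠ 0 → ∀ k, 0 < ‖sol A k x₀‖ := fun x hx k =>
    norm_pos_iff.mpr (sol_ne_zero hIA hx k)
  have hstep : ∀ (x : Euc d), x ≠ 0 → ∀ k, f x (k+1) ≤ f x k + K ∧ f x k ≤ f x (k+1) + K := by
    intro x hx k
    have h1 := hpos x hx k
    have h2 := hpos x hx (k+1)
    constructor
    · have hle := norm_sol_succ_le hcA k x
      have := Real.log_le_log h2 hle
      rw [Real.log_mul hc0.ne' h1.ne'] at this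
      simp only [hfdef, hKdef]
      linarith
    · have hle := norm_sol_le_succ hIA hcI k x
      have := Real.log_le_log h1 hle
      rw [Real.log_mul hc0.ne' h2.ne'] at this
      simp only [hfdef, hKdef]
      linarith
  have hiter : ∀ (x : Euc d), x ≠ 0 → ∀ m k,
      f x (m+k) ≤ f x m + K*(k:ℝ) ∧ f x m ≤ f x (m+k) + K*(k:ℝ) := by
    intro x hx m k
    induction k with
    | zero => simp
    | succ k ih =>
      have hs := hstep x hx (m+k)
      have e : f x (m + (k+1)) = f x ((m+k)+1) := rfl
      constructor
      · rw [e]; push_cast; linarith [hs.1, ih.1]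
      · rw [e]; push_cast; linarith [hs.2, ih.2]
  have hdiff : ∀ (x : Euc d), x ≠ 0 → ∀ m n : ℕ, m ≤ n →
      f x n - f x m ≤ K*((n:ℝ) - m) ∧ f x m - f x n ≤ K*((n:ℝ) - m) := by
    intro x hx m n hmn
    obtain ⟨k, rfl⟩ := Nat.exists_eq_add_of_le hmn
    have h := hiter x hx m k
    push_cast
    constructor <;> linarith [h.1, h.2]
  have hlam : ∀ (x : Euc d), x ≠ 0 → ∀ m n : ℕ,
      lam A n m x = (f x n - f x m)/((n:ℝ)-m) := by
    intro x hx m n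
    unfold lam
    rw [Real.log_div (hpos x hx n).ne' (hpos x hx m).ne']
  set S : ℕ → Set ℝ := fun N => {r | ∃ n m : ℕ, ∃ x₀ : Euc d,
    N < n - m ∧ x₀ ∈ (L : Set (Euc d)) ∧ x₀ ≠ 0 ∧ r = lam A n m x₀} with hSdef
  set S' : ℕ → Set ℝ := fun N => {r | ∃ n m : ℕ, ∃ x₀ : Euc d,
    N < n - m ∧ N < m ∧ x₀ ∈ (L : Set (Euc d)) ∧ x₀ ≠ 0 ∧ r = lam A n m x₀} with hS'def
  have hmemS : ∀ N r, r ∈ S N → -K ≤ r ∧ r ≤ K := by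
    rintro N r ⟨n, m, x, hnm, hxL, hx, rfl⟩
    have hmn : m < n := by omega
    have htN : (N:ℝ) + 1 ≤ (n:ℝ) - m := by
      have h1 : N + 1 ≤ n - m := hnm
      have h2 : (N:ℝ)+1 ≤ ((n-m:ℕ):ℝ) := by exact_mod_cast h1
      rwa [Nat.cast_sub hmn.le] at h2
    have hN0 : (0:ℝ) ≤ N := Nat.cast_nonneg N
    have ht0 : (0:ℝ) < (n:ℝ) - m := by linarith
    have hd := hdiff x hx m n hmn.le
    rw [hlam x hx m n]
    constructor
    · rw [le_div_iff₀ ht0]; nlinarith [hd.2]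
    · rw [div_le_iff₀ ht0]; nlinarith [hd.1]
  obtain ⟨x₀, hx₀L, hx₀⟩ := Submodule.exists_mem_ne_zero_of_ne_bot hL
  have hSne : ∀ N, (S N).Nonempty := fun N =>
    ⟨lam A (N+1) 0 x₀, N+1, 0, x₀, by omega, hx₀L, hx₀, rfl⟩
  have hS'ne : ∀ N, (S' N).Nonempty := fun N =>
    ⟨lam A (2*N+2) (N+1) x₀, 2*N+2, N+1, x₀, by omega, by omega, hx₀L, hx₀, rfl⟩
  have hSbdd : ∀ N, BddAbove (S N) := fun N => ⟨K, fun r hr => (hmemS N r hr).2⟩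
  have hsub : ∀ N, S' N ⊆ S N := by
    rintro N r ⟨n, m, x, h1, h2, h3, h4, h5⟩
    exact ⟨n, m, x, h1, h3, h4, h5⟩
  have hS'bdd : ∀ N, BddAbove (S' N) := fun N => (hSbdd N).mono (hsub N)
  have hS'le : ∀ N, sSup (S' N) ≤ K := fun N =>
    csSup_le (hS'ne N) (fun r hr => (hmemS N r (hsub N hr)).2)
  have hS'ge : ∀ N, -K ≤ sSup (S' N) := by
    intro N
    obtain ⟨r, hr⟩ := hS'ne N
    exact le_trans (hmemS N r (hsub N hr)).1 (le_csSup (hS'bdd N) hr)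
  have hSge : ∀ N, -K ≤ sSup (S N) := by
    intro N
    obtain ⟨r, hr⟩ := hSne N
    exact le_trans (hmemS N r hr).1 (le_csSup (hSbdd N) hr)
  have hub : upperBohl A (L : Set (Euc d)) = ⨅ N, sSup (S N) := rfl
  have hub' : upperBohl' A (L : Set (Euc d)) = ⨅ N, sSup (S' N) := rfl
  have hSmem : ∀ (N : ℕ) (r : ℝ), r ∈ S N ↔ ∃ n m : ℕ, ∃ x : Euc d,
      N < n - m ∧ x ∈ (L : Set (Euc d)) ∧ x ≠ 0 ∧ r = lam A n m x := fun _ _ => Iff.rfl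
  have hS'mem : ∀ (N : ℕ) (r : ℝ), r ∈ S' N ↔ ∃ n m : ℕ, ∃ x : Euc d,
      N < n - m ∧ N < m ∧ x ∈ (L : Set (Euc d)) ∧ x ≠ 0 ∧ r = lam A n m x := fun _ _ => Iff.rfl
  rw [hub, hub']
  clear_value S' S f K c
  have hbddS : BddBelow (Set.range fun N => sSup (S N)) := by
    refine ⟨-K, ?_⟩
    rintro y ⟨N0, rfl⟩
    exact hSge N0
  apply le_antisymm
  · -- hard direction
    have key : ∀ (N' : ℕ) (ε : ℝ), 0 < ε → (⨅ N, sSup (S N)) ≤ sSup (S' N') + ε := by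
      intro N' ε hε
      set β : ℝ := sSup (S' N') with hβdef
      clear_value β
      have hβabs : -K ≤ β ∧ β ≤ K := by
        rw [hβdef]; exact ⟨hS'ge N', hS'le N'⟩
      obtain ⟨P, hP⟩ := exists_nat_ge ((2*K*((N':ℝ)+1))/ε)
      have hP' : 2*K*((N':ℝ)+1) ≤ (P:ℝ) * ε := (div_le_iff₀ hε).mp hP
      set N : ℕ := max (2*N'+2) P with hNdef
      have hN1 : 2*N'+2 ≤ N := le_max_left _ _
      have hN2 : P ≤ N := le_max_right _ _
      clear_value N
      have claim : ∀ r ∈ S N, r ≤ β + ε := by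
        intro r hr
        rw [hSmem] at hr
        obtain ⟨n, m, x, hnm, hxL, hx, rfl⟩ := hr
        have hmn : m < n := by omega
        have ht : (0:ℝ) < (n:ℝ) - m := sub_pos.mpr (by exact_mod_cast hmn)
        have htN : (N:ℝ) + 1 ≤ (n:ℝ) - m := by
          have h1 : N + 1 ≤ n - m := hnm
          have h2 : (N:ℝ)+1 ≤ ((n-m:ℕ):ℝ) := by exact_mod_cast h1
          rwa [Nat.cast_sub hmn.le] at h2
        by_cases hm : N' < m
        · have hmem : lam A n m x ∈ S' N' :=
            (hS'mem N' _).mpr ⟨n, m, x, by omega, hm, hxL, hx, rfl⟩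
          have := le_csSup (hS'bdd N') hmem
          linarith
        · push_neg at hm
          set m'' : ℕ := N' + 1 with hm''def
          have hm''n : N' < n - m'' := by omega
          have hm''ltn : m'' < n := by omega
          have hmem' : lam A n m'' x ∈ S' N' :=
            (hS'mem N' _).mpr ⟨n, m'', x, hm''n, by omega, hxL, hx, rfl⟩
          have h1 : lam A n m'' x ≤ β := by
            rw [hβdef]; exact le_csSup (hS'bdd N') hmem'
          have ht'' : (0:ℝ) < (n:ℝ) - m'' := sub_pos.mpr (by exact_mod_cast hm''ltn)
          rw [hlam x hx m'' n] at h1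
          have h1' : f x n - f x m'' ≤ β * ((n:ℝ) - m'') := (div_le_iff₀ ht'').mp h1
          have h2 : f x m'' - f x m ≤ K * ((m'':ℝ) - m) := (hdiff x hx m m'' (by omega)).1
          rw [hlam x hx m n, div_le_iff₀ ht]
          have hm''c : (m'':ℝ) = (N':ℝ) + 1 := by rw [hm''def]; push_cast; ring
          have hmr0 : (0:ℝ) ≤ (m:ℝ) := Nat.cast_nonneg m
          have hmrN : (m:ℝ) ≤ (N':ℝ) := Nat.cast_le.mpr hm
          have hm''r : ((m'':ℝ) - m) ≤ (N':ℝ) + 1 := by rw [hm''c]; linarith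
          have hm''r0 : (0:ℝ) ≤ (m'':ℝ) - m := by rw [hm''c]; linarith
          have hnegβ : -β ≤ K := by linarith [hβabs.1]
          have hβ1 : β * ((n:ℝ)-m'') ≤ β * ((n:ℝ)-m) + K * ((m'':ℝ)-m) := by
            nlinarith [mul_le_mul_of_nonneg_right hnegβ hm''r0]
          have hK2 : K * ((m'':ℝ)-m) ≤ K * ((N':ℝ)+1) := mul_le_mul_of_nonneg_left hm''r hK0
          have hεt : 2*K*((N':ℝ)+1) ≤ ε * ((n:ℝ)-m) := by
            have h4 : (P:ℝ) ≤ (N:ℝ) := Nat.cast_le.mpr hN2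
            nlinarith
          nlinarith
      calc (⨅ N0, sSup (S N0)) ≤ sSup (S N) := ciInf_le hbddS N
        _ ≤ β + ε := csSup_le (hSne N) claim
    have h2 : ∀ ε : ℝ, 0 < ε → (⨅ N, sSup (S N)) ≤ (⨅ N, sSup (S' N)) + ε := by
      intro ε hε
      have h3 : (⨅ N, sSup (S N)) - ε ≤ ⨅ N, sSup (S' N) :=
        le_ciInf fun N' => by linarith [key N' ε hε]
      linarith
    exact le_of_forall_pos_le_add h2
  · refine ciInf_mono ?_ (fun N => csSup_le_csSup (hSbdd N) (hS'ne N) (hsub N))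
    refine ⟨-K, ?_⟩
    rintro y ⟨N0, rfl⟩
    exact hS'ge N0
end
end

section
/- For γ > ln‖A‖_∞ the γ-shifted system x(n+1) = e^{−γ}A(n)x(n) has a Bohl dichotomy with L₁ = ℝ^d and L₂ = {0}, and for γ < −ln‖A⁻¹‖_∞ it has a Bohl dichotomy with L₁ = {0} and L₂ = ℝ^d; consequently the Bohl dichotomy spectrum Σ_BD(A) is contained in [−ln‖A⁻¹‖_∞, ln‖A‖_∞]. -/
open Filter Topology

noncomputable section

lemma fwd_zero_succ_apply {d : ℕ} (A : ℕ → (Euc d →L[ℝ] Euc d)) (j : ℕ) (x : Euc d) :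
    fwd A 0 (j+1) x = A j (fwd A 0 j x) := by
  show (A (0+j) * fwd A 0 j) x = _
  rw [Nat.zero_add]; rfl

lemma shift_fwd_apply {d : ℕ} (A : ℕ → (Euc d →L[ℝ] Euc d)) (γ : ℝ) (m k : ℕ) (x : Euc d) :
    fwd (shift A γ) m k x = Real.exp (-γ * k) • fwd A m k x := by
  induction k with
  | zero => simp [fwd]
  | succ k ih =>
    have hL : fwd (shift A γ) m (k+1) x = shift A γ (m+k) (fwd (shift A γ) m k x) := rfl
    have hR : fwd A m (k+1) x = A (m+k) (fwd A m k x) := rfl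
    rw [hL, hR, ih, shift]
    simp only [ContinuousLinearMap.smul_apply, map_smul, smul_smul, ← Real.exp_add]
    congr 2
    push_cast
    ring

lemma norm_sol_shift {d : ℕ} (A : ℕ → (Euc d →L[ℝ] Euc d)) (γ : ℝ) (n : ℕ) (x : Euc d) :
    ‖sol (shift A γ) n x‖ = Real.exp (-γ * n) * ‖sol A n x‖ := by
  simp [sol, shift_fwd_apply, norm_smul, Real.abs_exp]

lemma fwd_le_aux {d : ℕ} (A : ℕ → (Euc d →L[ℝ] Euc d))
    (hb : BddAbove (Set.range fun n => ‖A n‖)) (m k : ℕ) (x : Euc d) :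
    ‖fwd A 0 (m + k) x‖ ≤ (supNorm A) ^ k * ‖fwd A 0 m x‖ := by
  have hSn : ∀ j, ‖A j‖ ≤ supNorm A := fun j => le_ciSup hb j
  have hS0 : 0 ≤ supNorm A := le_trans (norm_nonneg _) (hSn 0)
  induction k with
  | zero => simp
  | succ k ih =>
    have h1 : fwd A 0 (m + (k+1)) x = A (m+k) (fwd A 0 (m+k) x) := fwd_zero_succ_apply A (m+k) x
    calc ‖fwd A 0 (m + (k+1)) x‖ = ‖A (m+k) (fwd A 0 (m+k) x)‖ := by rw [h1]
      _ ≤ ‖A (m+k)‖ * ‖fwd A 0 (m+k) x‖ := (A (m+k)).le_opNorm _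
      _ ≤ supNorm A * ((supNorm A)^k * ‖fwd A 0 m x‖) := by
          apply mul_le_mul (hSn _) ih (norm_nonneg _) hS0
      _ = (supNorm A)^(k+1) * ‖fwd A 0 m x‖ := by ring

lemma fwd_ge_aux {d : ℕ} (A Ainv : ℕ → (Euc d →L[ℝ] Euc d))
    (hinv : ∀ n, Ainv n * A n = 1)
    (hb : BddAbove (Set.range fun n => ‖Ainv n‖)) (m k : ℕ) (x : Euc d) :
    ‖fwd A 0 m x‖ ≤ (supNorm Ainv) ^ k * ‖fwd A 0 (m + k) x‖ := by
  have hTn : ∀ j, ‖Ainv j‖ ≤ supNorm Ainv := fun j => le_ciSup hb j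
  have hT0 : 0 ≤ supNorm Ainv := le_trans (norm_nonneg _) (hTn 0)
  induction k with
  | zero => simp
  | succ k ih =>
    have h1 : fwd A 0 (m + (k+1)) x = A (m+k) (fwd A 0 (m+k) x) := fwd_zero_succ_apply A (m+k) x
    have h2 : fwd A 0 (m+k) x = Ainv (m+k) (fwd A 0 (m + (k+1)) x) := by
      rw [h1]
      have : Ainv (m+k) (A (m+k) (fwd A 0 (m+k) x)) = (Ainv (m+k) * A (m+k)) (fwd A 0 (m+k) x) := rfl
      rw [this, hinv]; rfl
    have h3 : ‖fwd A 0 (m+k) x‖ ≤ supNorm Ainv * ‖fwd A 0 (m + (k+1)) x‖ := by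
      calc ‖fwd A 0 (m+k) x‖ = ‖Ainv (m+k) (fwd A 0 (m + (k+1)) x)‖ := by rw [h2]
        _ ≤ ‖Ainv (m+k)‖ * ‖fwd A 0 (m + (k+1)) x‖ := (Ainv (m+k)).le_opNorm _
        _ ≤ supNorm Ainv * ‖fwd A 0 (m + (k+1)) x‖ :=
            mul_le_mul_of_nonneg_right (hTn _) (norm_nonneg _)
    calc ‖fwd A 0 m x‖ ≤ (supNorm Ainv)^k * ‖fwd A 0 (m+k) x‖ := ih
      _ ≤ (supNorm Ainv)^k * (supNorm Ainv * ‖fwd A 0 (m + (k+1)) x‖) :=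
          mul_le_mul_of_nonneg_left h3 (pow_nonneg hT0 k)
      _ = (supNorm Ainv)^(k+1) * ‖fwd A 0 (m + (k+1)) x‖ := by ring

theorem stmt15 {d : ℕ} (A Ainv : ℕ → (Euc d →L[ℝ] Euc d)) (hA : IsLyapunov A Ainv) :
    (∀ γ : ℝ, Real.log (supNorm A) < γ → HasBohlDichotomyOn (shift A γ) ⊤ ⊥) ∧
    (∀ γ : ℝ, γ < -Real.log (supNorm Ainv) → HasBohlDichotomyOn (shift A γ) ⊥ ⊤) ∧
    bdSpectrum A ⊆ Set.Icc (-Real.log (supNorm Ainv)) (Real.log (supNorm A)) := by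
  obtain ⟨h1, h2, hbA, hbI⟩ := hA
  have hSn : ∀ j, ‖A j‖ ≤ supNorm A := fun j => le_ciSup hbA j
  have hS0 : (0:ℝ) ≤ supNorm A := le_trans (norm_nonneg _) (hSn 0)
  have hTn : ∀ j, ‖Ainv j‖ ≤ supNorm Ainv := fun j => le_ciSup hbI j
  have hT0 : (0:ℝ) ≤ supNorm Ainv := le_trans (norm_nonneg _) (hTn 0)
  have hSle : supNorm A ≤ Real.exp (Real.log (supNorm A)) := by
    rcases eq_or_lt_of_le hS0 with h | h
    · rw [← h]; positivity
    · rw [Real.exp_log h]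
  have hTle : supNorm Ainv ≤ Real.exp (Real.log (supNorm Ainv)) := by
    rcases eq_or_lt_of_le hT0 with h | h
    · rw [← h]; positivity
    · rw [Real.exp_log h]
  have part1 : ∀ γ : ℝ, Real.log (supNorm A) < γ → HasBohlDichotomyOn (shift A γ) ⊤ ⊥ := by
    intro γ hγ
    refine ⟨γ - Real.log (supNorm A), by linarith, fun _ => 1, fun _ => 1,
      fun _ => one_pos, fun _ => one_pos, ?_, ?_⟩
    · intro x₀ _ m n hmn
      obtain ⟨k, rfl⟩ := Nat.exists_eq_add_of_le hmn
      rw [norm_sol_shift, norm_sol_shift]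
      have key : ‖sol A (m+k) x₀‖ ≤ (supNorm A)^k * ‖sol A m x₀‖ := fwd_le_aux A hbA m k x₀
      have hk : (supNorm A)^k ≤ Real.exp (Real.log (supNorm A) * k) := by
        calc (supNorm A)^k ≤ (Real.exp (Real.log (supNorm A)))^k := pow_le_pow_left₀ hS0 hSle k
          _ = Real.exp (Real.log (supNorm A) * k) := by
              rw [← Real.exp_nat_mul]; ring_nf
      calc Real.exp (-γ * ((m+k : ℕ):ℝ)) * ‖sol A (m+k) x₀‖
          ≤ Real.exp (-γ * ((m+k : ℕ):ℝ)) * ((supNorm A)^k * ‖sol A m x₀‖) :=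
            mul_le_mul_of_nonneg_left key (Real.exp_nonneg _)
        _ ≤ Real.exp (-γ * ((m+k : ℕ):ℝ)) *
              (Real.exp (Real.log (supNorm A) * k) * ‖sol A m x₀‖) :=
            mul_le_mul_of_nonneg_left
              (mul_le_mul_of_nonneg_right hk (norm_nonneg _)) (Real.exp_nonneg _)
        _ = 1 * Real.exp (-(γ - Real.log (supNorm A)) * (((m+k : ℕ):ℝ) - (m:ℝ))) *
              (Real.exp (-γ * (m:ℝ)) * ‖sol A m x₀‖) := by
            rw [one_mul, ← mul_assoc, ← mul_assoc, ← Real.exp_add, ← Real.exp_add]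
            congr 2
            push_cast
            ring
    · intro x₀ hx₀ m n hmn
      rw [Submodule.mem_bot] at hx₀
      subst hx₀
      simp [sol, map_zero]
  have part2 : ∀ γ : ℝ, γ < -Real.log (supNorm Ainv) → HasBohlDichotomyOn (shift A γ) ⊥ ⊤ := by
    intro γ hγ
    refine ⟨-Real.log (supNorm Ainv) - γ, by linarith, fun _ => 1, fun _ => 1,
      fun _ => one_pos, fun _ => one_pos, ?_, ?_⟩
    · intro x₀ hx₀ m n hmn
      rw [Submodule.mem_bot] at hx₀
      subst hx₀
      simp [sol, map_zero]
    · intro x₀ _ m n hmn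
      obtain ⟨k, rfl⟩ := Nat.exists_eq_add_of_le hmn
      rw [norm_sol_shift, norm_sol_shift]
      have key : ‖sol A m x₀‖ ≤ (supNorm Ainv)^k * ‖sol A (m+k) x₀‖ :=
        fwd_ge_aux A Ainv h2 hbI m k x₀
      have h01 : Real.exp (-Real.log (supNorm Ainv) - γ) * supNorm Ainv ≤ Real.exp (-γ) := by
        have e2 : Real.exp (-Real.log (supNorm Ainv)) * supNorm Ainv ≤ 1 := by
          have := mul_le_mul_of_nonneg_left hTle (Real.exp_nonneg (-Real.log (supNorm Ainv)))
          rwa [← Real.exp_add, neg_add_cancel, Real.exp_zero] at this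
        calc Real.exp (-Real.log (supNorm Ainv) - γ) * supNorm Ainv
            = Real.exp (-γ) * (Real.exp (-Real.log (supNorm Ainv)) * supNorm Ainv) := by
              rw [show -Real.log (supNorm Ainv) - γ = -γ + -Real.log (supNorm Ainv) by ring,
                Real.exp_add]; ring
          _ ≤ Real.exp (-γ) * 1 := mul_le_mul_of_nonneg_left e2 (Real.exp_nonneg _)
          _ = Real.exp (-γ) := mul_one _
      have hk : Real.exp ((-Real.log (supNorm Ainv) - γ) * k) * (supNorm Ainv)^k
          ≤ Real.exp (-γ * k) := by
        calc Real.exp ((-Real.log (supNorm Ainv) - γ) * k) * (supNorm Ainv)^k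
            = (Real.exp (-Real.log (supNorm Ainv) - γ) * supNorm Ainv)^k := by
              rw [mul_pow, ← Real.exp_nat_mul]; ring_nf
          _ ≤ (Real.exp (-γ))^k := pow_le_pow_left₀ (by positivity) h01 k
          _ = Real.exp (-γ * k) := by rw [← Real.exp_nat_mul]; ring_nf
      calc 1 * Real.exp ((-Real.log (supNorm Ainv) - γ) * (((m+k : ℕ):ℝ) - (m:ℝ))) *
            (Real.exp (-γ * (m:ℝ)) * ‖sol A m x₀‖)
          ≤ 1 * Real.exp ((-Real.log (supNorm Ainv) - γ) * (((m+k : ℕ):ℝ) - (m:ℝ))) *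
            (Real.exp (-γ * (m:ℝ)) * ((supNorm Ainv)^k * ‖sol A (m+k) x₀‖)) := by
            apply mul_le_mul_of_nonneg_left _ (by positivity)
            exact mul_le_mul_of_nonneg_left key (Real.exp_nonneg _)
        _ = (Real.exp ((-Real.log (supNorm Ainv) - γ) * (k:ℝ)) * (supNorm Ainv)^k) *
              (Real.exp (-γ * (m:ℝ)) * ‖sol A (m+k) x₀‖) := by
            rw [one_mul]
            have : (((m+k : ℕ):ℝ) - (m:ℝ)) = (k:ℝ) := by push_cast; ring
            rw [this]; ring
        _ ≤ Real.exp (-γ * (k:ℝ)) * (Real.exp (-γ * (m:ℝ)) * ‖sol A (m+k) x₀‖) :=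
            mul_le_mul_of_nonneg_right hk (by positivity)
        _ = Real.exp (-γ * ((m+k : ℕ):ℝ)) * ‖sol A (m+k) x₀‖ := by
            rw [← mul_assoc, ← Real.exp_add]
            congr 2
            push_cast
            ring
  refine ⟨part1, part2, ?_⟩
  intro γ hγ
  by_contra hcon
  rw [Set.mem_Icc] at hcon
  push_neg at hcon
  rcases le_or_gt (-Real.log (supNorm Ainv)) γ with h | h
  · exact hγ ⟨⊤, ⊥, isCompl_top_bot, part1 γ (hcon h)⟩
  · exact hγ ⟨⊥, ⊤, isCompl_bot_top, part2 γ h⟩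
end
end
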